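/- Under randomization of Z, exclusion restriction, and monotonicity Y₀ ≤ Y₁, the following bounds hold for each z ∈ {0,1}: P(Y = 1, R = 0 | Z = z) ≤ P(Y₀ = 1) ≤ P(Y = 1 | Z = z). Consequently, max over z of the lower expression bounds P(Y₀=1) from below and min over z of the upper expression bounds it from above. -/
import Mathlib

open Finset
open scoped Classical

namespace PS

/-- Probability of an event `A` under weight function `p` on a finite sample space. -/
noncomputable def Prob {Ω : Type*} [Fintype Ω] (p : Ω → ℝ) (A : Ω → Prop) : ℝ :=
  ∑ ω ∈ Finset.univ.filter A, p ω

/-- Conditional probability `P(A | B)`. -/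
noncomputable def CProb {Ω : Type*} [Fintype Ω] (p : Ω → ℝ) (A B : Ω → Prop) : ℝ :=
  Prob p (fun ω => A ω ∧ B ω) / Prob p B

/-- Conditional expectation `E[f | B]`. -/
noncomputable def CExp {Ω : Type*} [Fintype Ω] (p : Ω → ℝ) (f : Ω → ℝ) (B : Ω → Prop) : ℝ :=
  (∑ ω ∈ Finset.univ.filter B, p ω * f ω) / Prob p B

/-- Indicator of a Boolean value, as a real number. -/
def ind (b : Bool) : ℝ := if b then 1 else 0

/-- Observed recommendation `R = R_Z`. -/
def obsR {Ω : Type*} (Z R₀ R₁ : Ω → Bool) (ω : Ω) : Bool := if Z ω then R₁ ω else R₀ ω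

/-- Observed outcome `Y = Y_R` (exclusion restriction). -/
def obsY {Ω : Type*} (Rv Y₀ Y₁ : Ω → Bool) (ω : Ω) : Bool := if Rv ω then Y₁ ω else Y₀ ω

/-- `Z` is independent of the vector `(R₀, R₁, Y₀, Y₁)`. -/
def IndepZ {Ω : Type*} [Fintype Ω] (p : Ω → ℝ) (Z R₀ R₁ Y₀ Y₁ : Ω → Bool) : Prop :=
  ∀ z a b c d : Bool,
    Prob p (fun ω => Z ω = z ∧ R₀ ω = a ∧ R₁ ω = b ∧ Y₀ ω = c ∧ Y₁ ω = d) =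
      Prob p (fun ω => Z ω = z) *
        Prob p (fun ω => R₀ ω = a ∧ R₁ ω = b ∧ Y₀ ω = c ∧ Y₁ ω = d)

lemma Prob_congr {Ω : Type*} [Fintype Ω] (p : Ω → ℝ) {A B : Ω → Prop}
    (h : ∀ ω, A ω ↔ B ω) : Prob p A = Prob p B := by
  unfold Prob
  apply Finset.sum_congr _ (fun _ _ => rfl)
  ext ω; simp [h ω]

lemma Prob_false {Ω : Type*} [Fintype Ω] (p : Ω → ℝ) {A : Ω → Prop}
    (h : ∀ ω, ¬ A ω) : Prob p A = 0 := by
  unfold Prob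
  rw [Finset.filter_false_of_mem (fun ω _ => h ω)]
  simp

lemma Prob_mono {Ω : Type*} [Fintype Ω] {p : Ω → ℝ} (hp : ∀ ω, 0 ≤ p ω)
    {A B : Ω → Prop} (h : ∀ ω, A ω → B ω) : Prob p A ≤ Prob p B := by
  unfold Prob
  apply Finset.sum_le_sum_of_subset_of_nonneg
  · intro ω hω
    simp only [Finset.mem_filter] at *
    exact ⟨hω.1, h ω hω.2⟩
  · exact fun ω _ _ => hp ω

lemma Prob_fiber {Ω : Type*} [Fintype Ω] (p : Ω → ℝ) (A : Ω → Prop)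
    {τ : Type*} [Fintype τ] [DecidableEq τ] (g : Ω → τ) :
    Prob p A = ∑ t, Prob p (fun ω => A ω ∧ g ω = t) := by
  unfold Prob
  rw [← Finset.sum_fiberwise (Finset.univ.filter A) g p]
  apply Finset.sum_congr rfl
  intro t _
  apply Finset.sum_congr _ (fun _ _ => rfl)
  rw [Finset.filter_filter]
  ext ω; simp

lemma indep_event {Ω : Type*} [Fintype Ω] (p : Ω → ℝ) (Z R₀ R₁ Y₀ Y₁ : Ω → Bool)
    (hindep : IndepZ p Z R₀ R₁ Y₀ Y₁) (z : Bool)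
    (W : Bool → Bool → Bool → Bool → Prop) :
    Prob p (fun ω => Z ω = z ∧ W (R₀ ω) (R₁ ω) (Y₀ ω) (Y₁ ω)) =
      Prob p (fun ω => Z ω = z) * Prob p (fun ω => W (R₀ ω) (R₁ ω) (Y₀ ω) (Y₁ ω)) := by
  classical
  set g : Ω → Bool × Bool × Bool × Bool := fun ω => (R₀ ω, R₁ ω, Y₀ ω, Y₁ ω) with hg
  rw [Prob_fiber p (fun ω => Z ω = z ∧ W (R₀ ω) (R₁ ω) (Y₀ ω) (Y₁ ω)) g,
      Prob_fiber p (fun ω => W (R₀ ω) (R₁ ω) (Y₀ ω) (Y₁ ω)) g, Finset.mul_sum]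
  apply Finset.sum_congr rfl
  rintro ⟨a, b, c, d⟩ _
  by_cases hW : W a b c d
  · have h1 : Prob p (fun ω => (Z ω = z ∧ W (R₀ ω) (R₁ ω) (Y₀ ω) (Y₁ ω)) ∧ g ω = (a, b, c, d)) =
        Prob p (fun ω => Z ω = z ∧ R₀ ω = a ∧ R₁ ω = b ∧ Y₀ ω = c ∧ Y₁ ω = d) := by
      apply Prob_congr
      intro ω
      constructor
      · rintro ⟨⟨hz, -⟩, ht⟩
        simp only [hg, Prod.mk.injEq] at ht
        exact ⟨hz, ht.1, ht.2.1, ht.2.2.1, ht.2.2.2⟩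
      · rintro ⟨hz, ha, hb, hc, hd⟩
        refine ⟨⟨hz, ?_⟩, ?_⟩ <;> simp [hg, ha, hb, hc, hd, hW]
    have h2 : Prob p (fun ω => W (R₀ ω) (R₁ ω) (Y₀ ω) (Y₁ ω) ∧ g ω = (a, b, c, d)) =
        Prob p (fun ω => R₀ ω = a ∧ R₁ ω = b ∧ Y₀ ω = c ∧ Y₁ ω = d) := by
      apply Prob_congr
      intro ω
      constructor
      · rintro ⟨-, ht⟩
        simp only [hg, Prod.mk.injEq] at ht
        exact ⟨ht.1, ht.2.1, ht.2.2.1, ht.2.2.2⟩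
      · rintro ⟨ha, hb, hc, hd⟩
        refine ⟨?_, ?_⟩ <;> simp [hg, ha, hb, hc, hd, hW]
    rw [h1, h2, hindep z a b c d]
  · have h1 : Prob p (fun ω => (Z ω = z ∧ W (R₀ ω) (R₁ ω) (Y₀ ω) (Y₁ ω)) ∧ g ω = (a, b, c, d)) = 0 := by
      apply Prob_false
      rintro ω ⟨⟨-, hw⟩, ht⟩
      simp only [hg, Prod.mk.injEq] at ht
      rw [ht.1, ht.2.1, ht.2.2.1, ht.2.2.2] at hw
      exact hW hw
    have h2 : Prob p (fun ω => W (R₀ ω) (R₁ ω) (Y₀ ω) (Y₁ ω) ∧ g ω = (a, b, c, d)) = 0 := by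
      apply Prob_false
      rintro ω ⟨hw, ht⟩
      simp only [hg, Prod.mk.injEq] at ht
      rw [ht.1, ht.2.1, ht.2.2.1, ht.2.2.2] at hw
      exact hW hw
    rw [h1, h2, mul_zero]

theorem stmt7 {Ω : Type*} [Fintype Ω] (p : Ω → ℝ) (Z R₀ R₁ Y₀ Y₁ : Ω → Bool)
    (hp : ∀ ω, 0 ≤ p ω) (hsum : ∑ ω, p ω = 1)
    (hZpos : ∀ z : Bool, 0 < Prob p (fun ω => Z ω = z))
    (hindep : IndepZ p Z R₀ R₁ Y₀ Y₁)
    (hmono : ∀ ω, Y₀ ω = true → Y₁ ω = true) :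
    (∀ z : Bool,
      CProb p (fun ω => obsY (obsR Z R₀ R₁) Y₀ Y₁ ω = true ∧ obsR Z R₀ R₁ ω = false) (fun ω => Z ω = z) ≤ Prob p (fun ω => Y₀ ω = true) ∧
      Prob p (fun ω => Y₀ ω = true) ≤ CProb p (fun ω => obsY (obsR Z R₀ R₁) Y₀ Y₁ ω = true) (fun ω => Z ω = z)) ∧
    max (CProb p (fun ω => obsY (obsR Z R₀ R₁) Y₀ Y₁ ω = true ∧ obsR Z R₀ R₁ ω = false) (fun ω => Z ω = true)) (CProb p (fun ω => obsY (obsR Z R₀ R₁) Y₀ Y₁ ω = true ∧ obsR Z R₀ R₁ ω = false) (fun ω => Z ω = false)) ≤ Prob p (fun ω => Y₀ ω = true) ∧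
    Prob p (fun ω => Y₀ ω = true) ≤ min (CProb p (fun ω => obsY (obsR Z R₀ R₁) Y₀ Y₁ ω = true) (fun ω => Z ω = true)) (CProb p (fun ω => obsY (obsR Z R₀ R₁) Y₀ Y₁ ω = true) (fun ω => Z ω = false)) := by
  have hobsR : ∀ (z : Bool) (ω : Ω), Z ω = z → obsR Z R₀ R₁ ω = if z then R₁ ω else R₀ ω := by
    intro z ω h
    simp [obsR, h]
  have main : ∀ z : Bool,
      CProb p (fun ω => obsY (obsR Z R₀ R₁) Y₀ Y₁ ω = true ∧ obsR Z R₀ R₁ ω = false) (fun ω => Z ω = z) ≤ Prob p (fun ω => Y₀ ω = true) ∧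
      Prob p (fun ω => Y₀ ω = true) ≤ CProb p (fun ω => obsY (obsR Z R₀ R₁) Y₀ Y₁ ω = true) (fun ω => Z ω = z) := by
    intro z
    have hzne : Prob p (fun ω => Z ω = z) ≠ 0 := ne_of_gt (hZpos z)
    constructor
    · -- lower bound
      have hL : Prob p (fun ω => (obsY (obsR Z R₀ R₁) Y₀ Y₁ ω = true ∧ obsR Z R₀ R₁ ω = false) ∧ Z ω = z) =
          Prob p (fun ω => Z ω = z ∧ (Y₀ ω = true ∧ (if z then R₁ ω else R₀ ω) = false)) := by
        apply Prob_congr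
        intro ω
        constructor
        · rintro ⟨⟨hy, hr⟩, hz⟩
          exact ⟨hz, by simpa [obsY, hr] using hy, (hobsR z ω hz) ▸ hr⟩
        · rintro ⟨hz, hc, hr'⟩
          have hr : obsR Z R₀ R₁ ω = false := (hobsR z ω hz).trans hr'
          exact ⟨⟨by simpa [obsY, hr] using hc, hr⟩, hz⟩
      rw [CProb, hL,
        indep_event p Z R₀ R₁ Y₀ Y₁ hindep z (fun a b c _ => c = true ∧ (if z then b else a) = false),
        mul_div_cancel_left₀ _ hzne]
      exact Prob_mono hp (fun ω h => h.1)
    · -- upper bound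
      have hU : Prob p (fun ω => obsY (obsR Z R₀ R₁) Y₀ Y₁ ω = true ∧ Z ω = z) =
          Prob p (fun ω => Z ω = z ∧
            (((if z then R₁ ω else R₀ ω) = true ∧ Y₁ ω = true) ∨
             ((if z then R₁ ω else R₀ ω) = false ∧ Y₀ ω = true))) := by
        apply Prob_congr
        intro ω
        constructor
        · rintro ⟨hy, hz⟩
          refine ⟨hz, ?_⟩
          have hR := hobsR z ω hz
          cases hO : obsR Z R₀ R₁ ω with
          | false => exact Or.inr ⟨hR ▸ hO, by simpa [obsY, hO] using hy⟩
          | true => exact Or.inl ⟨hR ▸ hO, by simpa [obsY, hO] using hy⟩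
        · rintro ⟨hz, h | h⟩
          · have hr : obsR Z R₀ R₁ ω = true := (hobsR z ω hz).trans h.1
            exact ⟨by simpa [obsY, hr] using h.2, hz⟩
          · have hr : obsR Z R₀ R₁ ω = false := (hobsR z ω hz).trans h.1
            exact ⟨by simpa [obsY, hr] using h.2, hz⟩
      rw [CProb, hU,
        indep_event p Z R₀ R₁ Y₀ Y₁ hindep z (fun a b c d =>
          ((if z then b else a) = true ∧ d = true) ∨ ((if z then b else a) = false ∧ c = true)),
        mul_div_cancel_left₀ _ hzne]
      apply Prob_mono hp
      intro ω hc
      cases hrb : (if z then R₁ ω else R₀ ω) with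
      | false => exact Or.inr ⟨rfl, hc⟩
      | true => exact Or.inl ⟨rfl, hmono ω hc⟩
  exact ⟨main, max_le (main true).1 (main false).1, le_min (main true).2 (main false).2⟩

end PS
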